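/- If Π is an orthogonal projection and |ψ⟩ a unit vector with ‖|ψ⟩⟨ψ| − Π|ψ⟩⟨ψ|Π‖₁ ≤ ε, then ‖|ψ⟩ − Π|ψ⟩‖ ≤ ε. -/

import Mathlib

/-!
Put `A = |ψ⟩⟨ψ| - Π|ψ⟩⟨ψ|Π`. For a unit vector, `Aψ = ψ - ⟨ψ, Πψ⟩ Πψ`; since `ψ - Πψ ⟂ Πψ`,
Pythagoras gives `‖ψ - Πψ‖ ≤ ‖ψ - c Πψ‖` for every scalar `c`, hence `‖ψ - Πψ‖ ≤ ‖Aψ‖ ≤ ‖A‖`.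
Finally `‖A‖² = ‖A†A‖` is the largest eigenvalue of `A†A`, whereas `‖A‖₁` is the sum of the
square roots of all of them.
-/

open Matrix
open scoped ComplexOrder

noncomputable def traceNorm {n : Type*} [Fintype n] [DecidableEq n] (A : Matrix n n ℂ) : ℝ :=
  (((Matrix.posSemidef_conjTranspose_mul_self A).1.eigenvectorUnitary : Matrix n n ℂ) *
      diagonal (((↑) : ℝ → ℂ) ∘ Real.sqrt ∘ (Matrix.posSemidef_conjTranspose_mul_self A).1.eigenvalues) *
      (star ((Matrix.posSemidef_conjTranspose_mul_self A).1.eigenvectorUnitary : Matrix n n ℂ))).trace.re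

open scoped Matrix.Norms.L2Operator MatrixOrder

theorem norm_sub_le_norm_sub_smul_of_inner_eq_zero {𝕜 E : Type*} [RCLike 𝕜]
    [NormedAddCommGroup E] [InnerProductSpace 𝕜 E] {v p : E} (h : inner 𝕜 p (v - p) = 0)
    (c : 𝕜) : ‖v - p‖ ≤ ‖v - c • p‖ := by
  have hdecomp : v - c • p = (v - p) + (1 - c) • p := by module
  have horth : inner 𝕜 (v - p) ((1 - c) • p) = 0 := by
    rw [inner_smul_right, inner_eq_zero_symm.1 h, mul_zero]
  have hpyth := norm_add_sq_eq_norm_sq_add_norm_sq_of_inner_eq_zero _ _ horth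
  rw [hdecomp, mul_self_le_mul_self_iff (norm_nonneg _) (norm_nonneg _), hpyth]
  exact le_add_of_nonneg_right (mul_self_nonneg _)

namespace Matrix

section CommRing

variable {n R : Type*} [Fintype n] [CommRing R]

theorem vecMulVec_sub_mul_vecMulVec_mul_mulVec_self (M : Matrix n n R) {u v : n → R}
    (huv : v ⬝ᵥ u = 1) :
    (vecMulVec u v - M * vecMulVec u v * M) *ᵥ u = u - (v ⬝ᵥ M *ᵥ u) • M *ᵥ u := by
  rw [sub_mulVec, ← mulVec_mulVec, ← mulVec_mulVec, vecMulVec_mulVec, vecMulVec_mulVec, huv,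
    op_smul_eq_smul, op_smul_eq_smul, one_smul, mulVec_smul]

theorem IsHermitian.star_mulVec_dotProduct_sub_mulVec [StarRing R] {P : Matrix n n R}
    (hP : P.IsHermitian) (hP2 : IsIdempotentElem P) (x : n → R) :
    star (P *ᵥ x) ⬝ᵥ (x - P *ᵥ x) = 0 := by
  rw [star_mulVec, hP.eq, ← dotProduct_mulVec, mulVec_sub, mulVec_mulVec, hP2.eq, sub_self,
    dotProduct_zero]

end CommRing

variable {n : Type*} [Fintype n] [DecidableEq n]

theorem traceNorm_eq_sum_sqrt_eigenvalues (A : Matrix n n ℂ) :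
    traceNorm A = ∑ i, √((posSemidef_conjTranspose_mul_self A).1.eigenvalues i) := by
  set hH := (posSemidef_conjTranspose_mul_self A).1
  set U : Matrix n n ℂ := (hH.eigenvectorUnitary : Matrix n n ℂ)
  have hU : star U * U = 1 := Unitary.star_mul_self_of_mem hH.eigenvectorUnitary.2
  rw [traceNorm, trace_mul_cycle, hU, Matrix.one_mul, trace_diagonal]
  simp only [Function.comp_apply, Complex.re_sum, Complex.ofReal_re]

theorem l2_opNorm_le_traceNorm (A : Matrix n n ℂ) : ‖A‖ ≤ traceNorm A := by
  have hH := posSemidef_conjTranspose_mul_self A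
  have hT : 0 ≤ traceNorm A := by
    rw [traceNorm_eq_sum_sqrt_eigenvalues]; positivity
  have hsq : ‖Aᴴ * A‖ ≤ traceNorm A ^ 2 := by
    rw [CStarAlgebra.norm_le_iff_le_algebraMap _ (by positivity) (nonneg_iff_posSemidef.2 hH),
      le_algebraMap_iff_spectrum_le, hH.1.spectrum_real_eq_range_eigenvalues]
    rintro _ ⟨i, rfl⟩
    rw [traceNorm_eq_sum_sqrt_eigenvalues, ← Real.sq_sqrt (hH.eigenvalues_nonneg i)]
    gcongr
    exact Finset.single_le_sum (fun j _ => Real.sqrt_nonneg _) (Finset.mem_univ i)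
  rw [l2_opNorm_conjTranspose_mul_self, ← sq] at hsq
  exact abs_le_of_sq_le_sq' hsq hT |>.2

end Matrix

/-- If `‖|ψ⟩⟨ψ| - Π|ψ⟩⟨ψ|Π‖₁ ≤ ε` for a projection `Π` and a unit vector `ψ`, then
`‖ψ - Πψ‖ ≤ ε`. -/
theorem vector_close_of_traceNorm_close {n : Type*} [Fintype n] [DecidableEq n]
    (P : Matrix n n ℂ) (ψ : n → ℂ) (ε : ℝ)
    (hPh : P.IsHermitian) (hP2 : P * P = P)
    (hψ : ∑ i, ‖ψ i‖ ^ 2 = 1)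
    (hε : traceNorm (vecMulVec ψ (star ψ) - P * vecMulVec ψ (star ψ) * P) ≤ ε) :
    Real.sqrt (∑ i, ‖ψ i - P.mulVec ψ i‖ ^ 2) ≤ ε := by
  set A := vecMulVec ψ (star ψ) - P * vecMulVec ψ (star ψ) * P
  have hunit : ‖WithLp.toLp 2 ψ‖ = 1 := by rw [EuclideanSpace.norm_eq, hψ, Real.sqrt_one]
  have hψ1 : star ψ ⬝ᵥ ψ = 1 := by
    rw [dotProduct_comm, ← EuclideanSpace.inner_toLp_toLp, inner_self_eq_norm_sq_to_K, hunit,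
      RCLike.ofReal_one, one_pow]
  have horth :
      inner ℂ (WithLp.toLp 2 (P *ᵥ ψ)) (WithLp.toLp 2 ψ - WithLp.toLp 2 (P *ᵥ ψ)) = 0 := by
    rw [← WithLp.toLp_sub, EuclideanSpace.inner_toLp_toLp, dotProduct_comm]
    exact hPh.star_mulVec_dotProduct_sub_mulVec hP2 ψ
  calc √(∑ i, ‖ψ i - P.mulVec ψ i‖ ^ 2) = ‖WithLp.toLp 2 (ψ - P *ᵥ ψ)‖ := by
        rw [EuclideanSpace.norm_eq]; rfl
    _ ≤ ‖WithLp.toLp 2 (ψ - (star ψ ⬝ᵥ P *ᵥ ψ) • P *ᵥ ψ)‖ := by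
        rw [WithLp.toLp_sub, WithLp.toLp_sub, WithLp.toLp_smul]
        exact norm_sub_le_norm_sub_smul_of_inner_eq_zero horth _
    _ = ‖WithLp.toLp 2 (A *ᵥ ψ)‖ := by rw [vecMulVec_sub_mul_vecMulVec_mul_mulVec_self P hψ1]
    _ ≤ ‖A‖ * ‖WithLp.toLp 2 ψ‖ := l2_opNorm_mulVec A (WithLp.toLp 2 ψ)
    _ = ‖A‖ := by rw [hunit, mul_one]
    _ ≤ traceNorm A := l2_opNorm_le_traceNorm A
    _ ≤ ε := hε
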